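/- The quotiented implication is sound for application: let U be an ultrafilter over the set of states. For sets A, B ⊆ Λ × State, define A* = {t : {s : (t,s) ∈ A} ∈ U} and define (A → B) = {(t,s) : ∀ u, (u,s) ∈ A → (t u, s) ∈ B}. Then (A → B)* ⊆ {t : ∀ u ∈ A*, t u ∈ B*}. -/
import Mathlib


/-- The quotiented implication is sound for application:
`(A → B)* ⊆ {t | ∀ u ∈ A*, t u ∈ B*}`. -/
theorem quotient_implication_sound {Λ State : Type*} (app : Λ → Λ → Λ)
    (U : Ultrafilter State) (A B : Set (Λ × State)) (t : Λ)
    (ht : {s | ∀ u, (u, s) ∈ A → (app t u, s) ∈ B} ∈ U) :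
    ∀ u : Λ, {s | (u, s) ∈ A} ∈ U → {s | (app t u, s) ∈ B} ∈ U := by
  intro u hu
  filter_upwards [ht, hu] with s h1 h2 using h1 u h2
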